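/- arXiv:2002.01290 — 2 statements merged into one kernel-verified Lean document; each statement's English description precedes it below -/
import Mathlib

section
/- Let Ψ be a real N×P matrix, y ∈ ℝ^N and τ ≥ 0. Suppose ĉ ∈ ℝ^P is the unique minimizer of c ↦ ‖Ψc − y‖₂ over the set {c : ‖c‖₁ ≤ τ} (i.e. ‖Ψĉ − y‖₂ ≤ ‖Ψc − y‖₂ for all feasible c, with equality and feasibility implying c = ĉ only for ĉ itself). Then, setting σ = ‖Ψĉ − y‖₂, the vector ĉ solves the basis pursuit denoising problem with parameter σ: for every c ∈ ℝ^P with ‖Ψc − y‖₂ ≤ σ one has ‖ĉ‖₁ ≤ ‖c‖₁. -/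
open Matrix

/-- The unique solution of LASSO with parameter `τ` solves basis pursuit denoising with
parameter `σ = ‖Ψĉ − y‖₂`. -/
theorem lasso_unique_solves_bpdn {N P : ℕ} (Ψ : Matrix (Fin N) (Fin P) ℝ)
    (y : Fin N → ℝ) (τ : ℝ) (hτ : 0 ≤ τ) (chat : Fin P → ℝ)
    (hfeas : ∑ j, |chat j| ≤ τ)
    (hmin : ∀ c : Fin P → ℝ, ∑ j, |c j| ≤ τ →
      Real.sqrt (∑ i, (Ψ.mulVec chat i - y i) ^ 2) ≤
        Real.sqrt (∑ i, (Ψ.mulVec c i - y i) ^ 2))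
    (huniq : ∀ c : Fin P → ℝ, ∑ j, |c j| ≤ τ →
      Real.sqrt (∑ i, (Ψ.mulVec c i - y i) ^ 2) =
        Real.sqrt (∑ i, (Ψ.mulVec chat i - y i) ^ 2) → c = chat) :
    ∀ c : Fin P → ℝ,
      Real.sqrt (∑ i, (Ψ.mulVec c i - y i) ^ 2) ≤
        Real.sqrt (∑ i, (Ψ.mulVec chat i - y i) ^ 2) →
      ∑ j, |chat j| ≤ ∑ j, |c j| := by
  intro c hc
  by_contra h
  push_neg at h
  have hcfeas : ∑ j, |c j| ≤ τ := le_trans h.le hfeas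
  have heq := le_antisymm hc (hmin c hcfeas)
  have := huniq c hcfeas heq
  subst this
  exact lt_irrefl _ h
end

section
/- Let Ψ be a real N×P matrix, y ∈ ℝ^N and σ ≥ 0 be such that the feasible set {c : ‖Ψc − y‖₂ ≤ σ} is nonempty. Suppose ĉ ∈ ℝ^P is the unique minimizer of c ↦ ‖c‖₁ over this feasible set. Then, setting τ = ‖ĉ‖₁, the vector ĉ solves the LASSO problem with parameter τ: for every c ∈ ℝ^P with ‖c‖₁ ≤ τ one has ‖Ψĉ − y‖₂ ≤ ‖Ψc − y‖₂. -/
open Matrix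

/-- The unique solution of basis pursuit denoising with parameter `σ` solves LASSO with
parameter `τ = ‖ĉ‖₁`. -/
theorem bpdn_unique_solves_lasso {N P : ℕ} (Ψ : Matrix (Fin N) (Fin P) ℝ)
    (y : Fin N → ℝ) (σ : ℝ) (hσ : 0 ≤ σ) (chat : Fin P → ℝ)
    (hfeas : Real.sqrt (∑ i, (Ψ.mulVec chat i - y i) ^ 2) ≤ σ)
    (hmin : ∀ c : Fin P → ℝ,
      Real.sqrt (∑ i, (Ψ.mulVec c i - y i) ^ 2) ≤ σ → ∑ j, |chat j| ≤ ∑ j, |c j|)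
    (huniq : ∀ c : Fin P → ℝ,
      Real.sqrt (∑ i, (Ψ.mulVec c i - y i) ^ 2) ≤ σ →
      ∑ j, |c j| = ∑ j, |chat j| → c = chat) :
    ∀ c : Fin P → ℝ, ∑ j, |c j| ≤ ∑ j, |chat j| →
      Real.sqrt (∑ i, (Ψ.mulVec chat i - y i) ^ 2) ≤
        Real.sqrt (∑ i, (Ψ.mulVec c i - y i) ^ 2) := by
  intro c hc
  by_contra h
  push_neg at h
  have hcfeas : Real.sqrt (∑ i, (Ψ.mulVec c i - y i) ^ 2) ≤ σ := le_of_lt (lt_of_lt_of_le h hfeas)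
  have heq : ∑ j, |c j| = ∑ j, |chat j| := le_antisymm hc (hmin c hcfeas)
  have := huniq c hcfeas heq
  subst this
  exact lt_irrefl _ h
end
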